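/- The generic equivariance lemma for distance-gated coordinate updates: let N be a positive integer, 𝒩 : Fin N → Finset (Fin N), and for each pair (i,j) let c_{ij} : ℝ → ℝ be an arbitrary function. For positions y : Fin N → ℝ³, define the update y'_i = y_i + Σ_{j ∈ 𝒩(i)} c_{ij}(‖y_i - y_j‖²) · (y_i - y_j). Then for every real orthogonal 3×3 matrix O and every b ∈ ℝ³, the update applied to the transformed positions i ↦ O·y_i + b yields O·y'_i + b for every node i. -/

import Mathlib

open scoped BigOperators

/-- The E(3) action `y ↦ O·y + b` on 3-vectors. -/
noncomputable def e3Act (O : Matrix (Fin 3) (Fin 3) ℝ) (b : EuclideanSpace ℝ (Fin 3))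
    (v : EuclideanSpace ℝ (Fin 3)) : EuclideanSpace ℝ (Fin 3) :=
  (show EuclideanSpace ℝ (Fin 3) from WithLp.toLp 2 (O.mulVec v)) + b

/-- Distance-gated coordinate update
`y'_i = y_i + Σ_{j ∈ 𝒩(i)} c_{ij}(‖y_i - y_j‖²) · (y_i - y_j)`. -/
noncomputable def gatedUpdate {N : ℕ} (𝒩 : Fin N → Finset (Fin N))
    (c : Fin N → Fin N → ℝ → ℝ)
    (y : Fin N → EuclideanSpace ℝ (Fin 3)) (i : Fin N) : EuclideanSpace ℝ (Fin 3) :=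
  y i + ∑ j ∈ 𝒩 i, c i j (‖y i - y j‖ ^ 2) • (y i - y j)

/-! A rigid motion `y ↦ O·y + b` is an affine isometry. It sends each difference `y i - y j` to
its image under the orthogonal linear part, which preserves norms, so every gate sees the same
argument; the update adds to `y i` a linear combination of such differences, and is therefore
carried along by the motion. -/

theorem AffineIsometry.map_add_sum_smul_sub {ι E : Type*} [NormedAddCommGroup E] [NormedSpace ℝ E]
    (f : E →ᵃⁱ[ℝ] E) (s : Finset ι) (g : ι → ℝ → ℝ) (x : E) (y : ι → E) :
    f (x + ∑ j ∈ s, g j ‖x - y j‖ • (x - y j)) =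
      f x + ∑ j ∈ s, g j ‖f x - f (y j)‖ • (f x - f (y j)) := by
  have hsub (j : ι) : f x - f (y j) = f.linearIsometry (x - y j) := (f.linearMap_vsub x (y j)).symm
  simp only [hsub, LinearIsometry.norm_map, ← map_smul, ← map_sum]
  rw [add_comm x, add_comm (f x)]
  exact f.map_vadd x _

section

variable {n : Type*} [Fintype n] [DecidableEq n]

noncomputable def Matrix.toEuclideanLinearIsometry (O : Matrix n n ℝ)
    (hO : O ∈ Matrix.orthogonalGroup n ℝ) : EuclideanSpace ℝ n →ₗᵢ[ℝ] EuclideanSpace ℝ n where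
  toLinearMap := Matrix.toEuclideanLin O
  norm_map' := (Matrix.toEuclideanCLM (𝕜 := ℝ) O).norm_map_of_mem_unitary (Unitary.map_mem _ hO)

noncomputable def Matrix.orthogonalAffineIsometry (O : Matrix n n ℝ)
    (hO : O ∈ Matrix.orthogonalGroup n ℝ) (b : EuclideanSpace ℝ n) :
    EuclideanSpace ℝ n →ᵃⁱ[ℝ] EuclideanSpace ℝ n :=
  (AffineIsometryEquiv.constVAdd ℝ (EuclideanSpace ℝ n) b).toAffineIsometry.comp
    (O.toEuclideanLinearIsometry hO).toAffineIsometry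

end

theorem e3Act_eq_orthogonalAffineIsometry (O : Matrix (Fin 3) (Fin 3) ℝ)
    (hO : O ∈ Matrix.orthogonalGroup (Fin 3) ℝ) (b : EuclideanSpace ℝ (Fin 3)) :
    e3Act O b = O.orthogonalAffineIsometry hO b := by
  ext v : 1
  exact add_comm _ _

theorem gatedUpdate_E3_equivariant_general (N : ℕ)
    (𝒩 : Fin N → Finset (Fin N)) (c : Fin N → Fin N → ℝ → ℝ)
    (y : Fin N → EuclideanSpace ℝ (Fin 3))
    (O : Matrix (Fin 3) (Fin 3) ℝ) (hO : O ∈ Matrix.orthogonalGroup (Fin 3) ℝ)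
    (b : EuclideanSpace ℝ (Fin 3)) :
    ∀ i, gatedUpdate 𝒩 c (fun j => e3Act O b (y j)) i = e3Act O b (gatedUpdate 𝒩 c y i) := by
  intro i
  rw [e3Act_eq_orthogonalAffineIsometry O hO b]
  exact ((O.orthogonalAffineIsometry hO b).map_add_sum_smul_sub (𝒩 i) (fun j r => c i j (r ^ 2))
    (y i) y).symm

/-- Generic equivariance of distance-gated coordinate updates: if the
scalar gates depend on positions only through the pairwise squared distances, then the
update commutes with every rigid motion `y ↦ O·y + b`. -/
theorem gatedUpdate_E3_equivariant (N : ℕ) (hN : 0 < N)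
    (𝒩 : Fin N → Finset (Fin N)) (c : Fin N → Fin N → ℝ → ℝ)
    (y : Fin N → EuclideanSpace ℝ (Fin 3))
    (O : Matrix (Fin 3) (Fin 3) ℝ) (hO : O ∈ Matrix.orthogonalGroup (Fin 3) ℝ)
    (b : EuclideanSpace ℝ (Fin 3)) :
    ∀ i, gatedUpdate 𝒩 c (fun j => e3Act O b (y j)) i = e3Act O b (gatedUpdate 𝒩 c y i) :=
  gatedUpdate_E3_equivariant_general N 𝒩 c y O hO b
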